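/- Let σ, σ_1, …, σ_n ≥ 0 be real numbers and p_1,…,p_n ∈ (0,1) with Σ_i p_i = 1. Then the statement 'for all x_1,…,x_n ∈ R with Σ_i p_i x_i = 0, N_1(0,σ²) ≤_cx Σ_i p_i N_1(x_i,σ_i²)' holds if and only if σ ≤ Σ_i p_i σ_i. -/

import Mathlib

open MeasureTheory ProbabilityTheory Matrix

noncomputable def stdGaussianPi (d : ℕ) : Measure (Fin d → ℝ) :=
  Measure.pi fun _ => gaussianReal 0 1

/-- The positive semidefinite square root of a positive semidefinite matrix
(the definition removed from Mathlib, restored verbatim). -/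
noncomputable def Matrix.PosSemidef.sqrt {n : Type*} [Fintype n] [DecidableEq n]
    {A : Matrix n n ℝ} (hA : A.PosSemidef) : Matrix n n ℝ :=
  hA.1.eigenvectorUnitary.1 * diagonal ((√·) ∘ hA.1.eigenvalues) *
    (star hA.1.eigenvectorUnitary : Matrix n n ℝ)

/-- The Gaussian law `N_d(m, S)` on `ℝ^d`, defined as the image of the standard Gaussian
by `z ↦ m + S^{1/2} z`. -/
noncomputable def gaussianPi {d : ℕ} (m : Fin d → ℝ) {S : Matrix (Fin d) (Fin d) ℝ}
    (hS : S.PosSemidef) : Measure (Fin d → ℝ) :=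
  Measure.map (fun z => m + hS.sqrt.mulVec z) (stdGaussianPi d)

/-- Convex order between measures: `μ ≤_cx ν`. -/
def ConvexOrder {E : Type*} [NormedAddCommGroup E] [NormedSpace ℝ E] [MeasurableSpace E]
    (μ ν : Measure E) : Prop :=
  ∀ φ : E → ℝ, ConvexOn ℝ Set.univ φ → Integrable φ μ → Integrable φ ν →
    ∫ x, φ x ∂μ ≤ ∫ x, φ x ∂ν

/-! Every law `N(m, c²)` is the image of the standard Gaussian under `z ↦ c z + m`, so all the
laws involved are coupled through one standard Gaussian `Z`. Testing the convex order against `|·|`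
with `x = 0` gives `|σ| E|Z| ≤ (∑ pᵢ σᵢ) E|Z|`, hence necessity. Conversely let `τ = ∑ pᵢ σᵢ`. As
`∑ pᵢ xᵢ = 0`, finite Jensen gives `φ(τ z) ≤ U z := ∑ pᵢ φ(σᵢ z + xᵢ)` pointwise, and `E U(Z)` is the
mixture integral. Writing `σ = a τ` with `a ∈ [0, 1]`, convexity gives
`φ(σ z) ≤ a U z + (1 - a) φ 0`, and `φ 0 ≤ U 0 ≤ E U(Z)` by Jensen for each Gaussian component. -/
lemma gaussianReal_map_mul_add (c m : ℝ) :
    (gaussianReal 0 1).map (fun z => c * z + m) = gaussianReal m (c ^ 2).toNNReal := by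
  have h : (fun z : ℝ => c * z + m) = (· + m) ∘ (c * ·) := rfl
  rw [h, ← Measure.map_map (by fun_prop) (by fun_prop), gaussianReal_map_const_mul,
    gaussianReal_map_add_const, mul_zero, zero_add, mul_one]
  congr 1
  ext
  simp [sq_nonneg]

lemma integrable_gaussianReal_iff {φ : ℝ → ℝ} {c m : ℝ}
    (hφ : AEStronglyMeasurable φ (gaussianReal m (c ^ 2).toNNReal)) :
    Integrable φ (gaussianReal m (c ^ 2).toNNReal) ↔
      Integrable (fun z => φ (c * z + m)) (gaussianReal 0 1) := by
  rw [← gaussianReal_map_mul_add] at hφ ⊢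
  exact integrable_map_measure hφ (by fun_prop)

lemma integral_gaussianReal_eq_integral_mul_add {φ : ℝ → ℝ} {c m : ℝ}
    (hφ : AEStronglyMeasurable φ (gaussianReal m (c ^ 2).toNNReal)) :
    ∫ y, φ y ∂gaussianReal m (c ^ 2).toNNReal = ∫ z, φ (c * z + m) ∂gaussianReal 0 1 := by
  rw [← gaussianReal_map_mul_add] at hφ ⊢
  exact integral_map (by fun_prop) hφ

lemma ConvexOn.le_integral_gaussianReal {φ : ℝ → ℝ} (hφ : ConvexOn ℝ Set.univ φ)
    {μ : ℝ} {v : NNReal} (hint : Integrable φ (gaussianReal μ v)) :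
    φ μ ≤ ∫ y, φ y ∂gaussianReal μ v := by
  have h := hφ.map_integral_le (hφ.continuousOn isOpen_univ) isClosed_univ
    (ae_of_all _ fun _ => Set.mem_univ _) ((memLp_id_gaussianReal 1).integrable le_rfl) hint
  simpa only [id, integral_id_gaussianReal] using h

lemma integral_abs_gaussianReal_zero (c : ℝ) :
    ∫ y, |y| ∂gaussianReal 0 (c ^ 2).toNNReal = |c| * ∫ z, |z| ∂gaussianReal 0 1 := by
  rw [integral_gaussianReal_eq_integral_mul_add continuous_abs.aestronglyMeasurable,
    ← integral_const_mul]
  simp only [add_zero, abs_mul]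

lemma integrable_abs_gaussianReal (μ : ℝ) (v : NNReal) :
    Integrable (fun y => |y|) (gaussianReal μ v) :=
  ((memLp_id_gaussianReal 1).integrable le_rfl).abs

lemma integral_abs_gaussianReal_zero_one_pos : 0 < ∫ z, |z| ∂gaussianReal 0 1 := by
  rw [integral_pos_iff_support_of_nonneg (fun z => abs_nonneg z) (integrable_abs_gaussianReal 0 1)]
  have hsupp : Function.support (fun z : ℝ => |z|) = {0}ᶜ := by
    ext z
    simp
  have := nullSingletonClass_gaussianReal (μ := 0) one_ne_zero
  rw [hsupp, prob_compl_eq_one_sub (measurableSet_singleton 0), measure_singleton]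
  simp

section Mixture

variable {α ι : Type*} [MeasurableSpace α] [Fintype ι] {μ : ι → Measure α} {p : ι → ℝ}
  {f : α → ℝ}

lemma integrable_sum_ofReal_smul_measure (hf : ∀ i, Integrable f (μ i)) :
    Integrable f (∑ i, ENNReal.ofReal (p i) • μ i) :=
  integrable_finsetSum_measure.2 fun i _ => (hf i).smul_measure ENNReal.ofReal_ne_top

lemma MeasureTheory.Integrable.of_sum_ofReal_smul_measure
    (hf : Integrable f (∑ i, ENNReal.ofReal (p i) • μ i)) (i : ι) (hp : 0 < p i) :
    Integrable f (μ i) :=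
  (integrable_smul_measure (by simpa using hp) ENNReal.ofReal_ne_top).1
    (integrable_finsetSum_measure.1 hf i (Finset.mem_univ i))

lemma integral_sum_ofReal_smul_measure (hp : ∀ i, 0 ≤ p i) (hf : ∀ i, Integrable f (μ i)) :
    ∫ x, f x ∂(∑ i, ENNReal.ofReal (p i) • μ i) = ∑ i, p i * ∫ x, f x ∂μ i := by
  rw [integral_finsetSum_measure fun i _ => (hf i).smul_measure ENNReal.ofReal_ne_top]
  simp only [integral_smul_measure, ENNReal.toReal_ofReal (hp _), smul_eq_mul]

end Mixture

lemma ConvexOn.map_mul_le_of_le {φ : ℝ → ℝ} (hφ : ConvexOn ℝ Set.univ φ) {s t : ℝ} (hs : 0 ≤ s)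
    (hst : s ≤ t) (y : ℝ) : φ (s * y) ≤ s / t * φ (t * y) + (1 - s / t) * φ 0 := by
  have hst' : s / t * t = s := by
    rcases eq_or_ne t 0 with ht | ht
    · simp only [ht, mul_zero]; linarith
    · exact div_mul_cancel₀ s ht
  calc φ (s * y) = φ ((s / t) • (t * y) + (1 - s / t) • 0) := by
        rw [smul_eq_mul, smul_zero, add_zero, ← mul_assoc, hst']
    _ ≤ (s / t) • φ (t * y) + (1 - s / t) • φ 0 :=
        hφ.2 (Set.mem_univ _) (Set.mem_univ _) (div_nonneg hs (hs.trans hst))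
          (sub_nonneg.2 (div_le_one_of_le₀ hst (hs.trans hst))) (by ring)
    _ = s / t * φ (t * y) + (1 - s / t) * φ 0 := by simp only [smul_eq_mul]

section GaussianMixture

variable {ι : Type*} [Fintype ι] {σ : ℝ} {σs p : ι → ℝ}

lemma abs_le_sum_mul_of_convexOrder_gaussianReal (hσs : ∀ i, 0 ≤ σs i) (hp : ∀ i, 0 ≤ p i)
    (h : ConvexOrder (gaussianReal 0 (σ ^ 2).toNNReal)
      (∑ i, ENNReal.ofReal (p i) • gaussianReal 0 (σs i ^ 2).toNNReal)) :
    |σ| ≤ ∑ i, p i * σs i := by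
  have key := h (fun y => |y|) convexOn_univ_norm
    (integrable_abs_gaussianReal _ _)
    (integrable_sum_ofReal_smul_measure fun _ => integrable_abs_gaussianReal _ _)
  rw [integral_sum_ofReal_smul_measure hp fun _ => integrable_abs_gaussianReal _ _] at key
  simp only [integral_abs_gaussianReal_zero, abs_of_nonneg (hσs _), ← mul_assoc,
    ← Finset.sum_mul] at key
  exact le_of_mul_le_mul_right key integral_abs_gaussianReal_zero_one_pos

lemma ConvexOn.map_sum_mul_le_integral_gaussianReal_mixture {x : ι → ℝ} {φ : ℝ → ℝ}
    (hφ : ConvexOn ℝ Set.univ φ) (hp : ∀ i, 0 ≤ p i) (hp1 : ∑ i, p i = 1)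
    (hint : ∀ i, Integrable φ (gaussianReal (x i) (σs i ^ 2).toNNReal)) :
    φ (∑ i, p i * x i) ≤
      ∫ y, φ y ∂(∑ i, ENNReal.ofReal (p i) • gaussianReal (x i) (σs i ^ 2).toNNReal) := by
  rw [integral_sum_ofReal_smul_measure hp hint]
  calc φ (∑ i, p i * x i) ≤ ∑ i, p i * φ (x i) := by
        simpa only [smul_eq_mul] using hφ.map_sum_le (fun i _ => hp i) hp1
          (fun i _ => Set.mem_univ (x i))
    _ ≤ _ := by
        gcongr with i
        · exact hp i
        · exact hφ.le_integral_gaussianReal (hint i)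

lemma convexOrder_gaussianReal_mixture {x : ι → ℝ} (hσ : 0 ≤ σ) (hp : ∀ i, 0 < p i)
    (hp1 : ∑ i, p i = 1) (hx : ∑ i, p i * x i = 0) (hle : σ ≤ ∑ i, p i * σs i) :
    ConvexOrder (gaussianReal 0 (σ ^ 2).toNNReal)
      (∑ i, ENNReal.ofReal (p i) • gaussianReal (x i) (σs i ^ 2).toNNReal) := by
  intro φ hφ hφμ hφν
  have hφc : Continuous φ := continuousOn_univ.mp (hφ.continuousOn isOpen_univ)
  have hcomp i : Integrable φ (gaussianReal (x i) (σs i ^ 2).toNNReal) :=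
    hφν.of_sum_ofReal_smul_measure i (hp i)
  have hcomp' i : Integrable (fun z => φ (σs i * z + x i)) (gaussianReal 0 1) :=
    (integrable_gaussianReal_iff hφc.aestronglyMeasurable).1 (hcomp i)
  set τ := ∑ i, p i * σs i
  set U : ℝ → ℝ := fun z => ∑ i, p i * φ (σs i * z + x i)
  set M := ∫ y, φ y ∂(∑ i, ENNReal.ofReal (p i) • gaussianReal (x i) (σs i ^ 2).toNNReal)
  have hUint : Integrable U (gaussianReal 0 1) :=
    integrable_finsetSum _ fun i _ => (hcomp' i).const_mul _
  have hM : M = ∑ i, p i * ∫ y, φ y ∂gaussianReal (x i) (σs i ^ 2).toNNReal :=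
    integral_sum_ofReal_smul_measure (fun i => (hp i).le) hcomp
  have hUM : ∫ z, U z ∂gaussianReal 0 1 = M := by
    rw [hM, integral_finsetSum _ fun i _ => (hcomp' i).const_mul _]
    simp only [integral_const_mul,
      integral_gaussianReal_eq_integral_mul_add hφc.aestronglyMeasurable]
  have hjensen z : φ (τ * z) ≤ U z := by
    have h := hφ.map_sum_le (fun i _ => (hp i).le) hp1
      (fun i _ => Set.mem_univ (σs i * z + x i))
    have hmean : ∑ i, p i * (σs i * z + x i) = τ * z := by
      simp only [mul_add, Finset.sum_add_distrib, hx, add_zero, τ, Finset.sum_mul, mul_assoc]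
    simpa only [smul_eq_mul, hmean] using h
  have hφ0 : φ 0 ≤ M := by
    simpa only [hx] using hφ.map_sum_mul_le_integral_gaussianReal_mixture
      (fun i => (hp i).le) hp1 hcomp
  set a := σ / τ
  have ha1 : a ≤ 1 := div_le_one_of_le₀ hle (hσ.trans hle)
  have hpt z : φ (σ * z + 0) ≤ a * U z + (1 - a) * φ 0 := by
    rw [add_zero]
    refine (hφ.map_mul_le_of_le hσ hle z).trans ?_
    gcongr
    exacts [div_nonneg hσ (hσ.trans hle), hjensen z]
  calc ∫ y, φ y ∂gaussianReal 0 (σ ^ 2).toNNReal = ∫ z, φ (σ * z + 0) ∂gaussianReal 0 1 :=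
        integral_gaussianReal_eq_integral_mul_add hφc.aestronglyMeasurable
    _ ≤ ∫ z, (a * U z + (1 - a) * φ 0) ∂gaussianReal 0 1 :=
        integral_mono ((integrable_gaussianReal_iff hφc.aestronglyMeasurable).1 hφμ)
          ((hUint.const_mul a).add (integrable_const _)) hpt
    _ = a * M + (1 - a) * φ 0 := by
        rw [integral_add (hUint.const_mul a) (integrable_const _), integral_const_mul, hUM]
        simp
    _ ≤ M := by nlinarith

end GaussianMixture

theorem stmt4_general {n : ℕ} (σ : ℝ) (σs : Fin n → ℝ)
    (hσ : 0 ≤ σ) (hσs : ∀ i, 0 ≤ σs i)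
    (p : Fin n → ℝ) (hp : ∀ i, p i ∈ Set.Ioo (0:ℝ) 1) (hp1 : ∑ i, p i = 1) :
    (∀ x : Fin n → ℝ, ∑ i, p i * x i = 0 →
        ConvexOrder (gaussianReal 0 (σ ^ 2).toNNReal)
          (∑ i, ENNReal.ofReal (p i) • gaussianReal (x i) ((σs i ^ 2).toNNReal))) ↔
      σ ≤ ∑ i, p i * σs i := by
  refine ⟨fun h => ?_, fun hle x hx =>
    convexOrder_gaussianReal_mixture hσ (fun i => (hp i).1) hp1 hx hle⟩
  have h0 := h 0 (by simp)
  simp only [Pi.zero_apply] at h0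
  exact (le_abs_self σ).trans
    (abs_le_sum_mul_of_convexOrder_gaussianReal hσs (fun i => (hp i).1.le) h0)

theorem stmt4 {n : ℕ} (hn : 2 ≤ n) (σ : ℝ) (σs : Fin n → ℝ)
    (hσ : 0 ≤ σ) (hσs : ∀ i, 0 ≤ σs i)
    (p : Fin n → ℝ) (hp : ∀ i, p i ∈ Set.Ioo (0:ℝ) 1) (hp1 : ∑ i, p i = 1) :
    (∀ x : Fin n → ℝ, ∑ i, p i * x i = 0 →
        ConvexOrder (gaussianReal 0 (σ ^ 2).toNNReal)
          (∑ i, ENNReal.ofReal (p i) • gaussianReal (x i) ((σs i ^ 2).toNNReal))) ↔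
      σ ≤ ∑ i, p i * σs i :=
  stmt4_general σ σs hσ hσs p hp hp1
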